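/- If the hyperspace S_c(X) of nontrivial convergent sequences of X is a Baire space, then X is a Baire space. -/

import Mathlib

open Set TopologicalSpace Filter

/-- The Vietoris topology on collections of subsets of `X`. -/
def vietoris (X : Type*) [TopologicalSpace X] : TopologicalSpace (Set X) :=
  TopologicalSpace.generateFrom
    ({t | ∃ U : Set X, IsOpen U ∧ t = {S : Set X | S ⊆ U}} ∪
     {t | ∃ U : Set X, IsOpen U ∧ t = {S : Set X | (S ∩ U).Nonempty}})

/-- The set `S` converges to `x`: `x ∈ S` and `S \ U` is finite for every open
neighborhood `U` of `x`. -/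
def ConvTo {X : Type*} [TopologicalSpace X] (S : Set X) (x : X) : Prop :=
  x ∈ S ∧ ∀ U : Set X, IsOpen U → x ∈ U → (S \ U).Finite

/-- `S` is a nontrivial convergent sequence in `X`: a countably infinite closed set with a
unique non-isolated point `x` (all other points are isolated in `S`), converging to `x`. -/
def IsNCS (X : Type*) [TopologicalSpace X] (S : Set X) : Prop :=
  S.Infinite ∧ S.Countable ∧ IsClosed S ∧ ∃ x : X, ConvTo S x ∧
    (∀ y ∈ S, y ≠ x → ∃ U : Set X, IsOpen U ∧ U ∩ S = {y}) ∧
    ¬ ∃ U : Set X, IsOpen U ∧ U ∩ S = {x}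

/-- The hyperspace of nontrivial convergent sequences of `X`. -/
def Sc (X : Type*) [TopologicalSpace X] : Type _ :=
  {S : Set X // IsNCS X S}

instance (X : Type*) [TopologicalSpace X] : TopologicalSpace (Sc X) :=
  TopologicalSpace.induced (fun S : Sc X => S.1) (vietoris X)


section Aux
variable {X : Type*} [TopologicalSpace X]

/-- subbasis of the Vietoris topology -/
def vsub (X : Type*) [TopologicalSpace X] : Set (Set (Set X)) :=
  ({t | ∃ U : Set X, IsOpen U ∧ t = {S : Set X | S ⊆ U}} ∪
   {t | ∃ U : Set X, IsOpen U ∧ t = {S : Set X | (S ∩ U).Nonempty}})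

lemma vietoris_basic {𝒱 : Set (Set X)} (h : TopologicalSpace.GenerateOpen (vsub X) 𝒱) :
    ∀ S ∈ 𝒱, ∃ (O : Set X) (F : Finset (Set X)), IsOpen O ∧ (∀ v ∈ F, IsOpen v) ∧
      S ⊆ O ∧ (∀ v ∈ F, (S ∩ v).Nonempty) ∧
      ∀ T : Set X, T ⊆ O → (∀ v ∈ F, (T ∩ v).Nonempty) → T ∈ 𝒱 := by
  classical
  induction h with
  | basic s hs =>
    intro S hS
    rcases hs with ⟨U, hU, rfl⟩ | ⟨U, hU, rfl⟩
    · exact ⟨U, ∅, hU, by simp, hS, by simp, fun T hT _ => hT⟩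
    · refine ⟨univ, {U}, isOpen_univ, by simpa using hU, subset_univ _, by simpa using hS,
        fun T _ hT => by simpa using hT U (by simp)⟩
  | univ =>
    intro S _
    exact ⟨univ, ∅, isOpen_univ, by simp, subset_univ _, by simp, fun T _ _ => trivial⟩
  | inter s t _ _ ihs iht =>
    intro S hS
    obtain ⟨O1, F1, hO1, hF1, hSO1, hSF1, hT1⟩ := ihs S hS.1
    obtain ⟨O2, F2, hO2, hF2, hSO2, hSF2, hT2⟩ := iht S hS.2
    refine ⟨O1 ∩ O2, F1 ∪ F2, hO1.inter hO2, ?_, subset_inter hSO1 hSO2, ?_, ?_⟩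
    · intro v hv; rcases Finset.mem_union.1 hv with hv | hv
      exacts [hF1 v hv, hF2 v hv]
    · intro v hv; rcases Finset.mem_union.1 hv with hv | hv
      exacts [hSF1 v hv, hSF2 v hv]
    · intro T hTO hTF
      exact ⟨hT1 T (hTO.trans inter_subset_left) (fun v hv => hTF v (Finset.mem_union_left _ hv)),
        hT2 T (hTO.trans inter_subset_right) (fun v hv => hTF v (Finset.mem_union_right _ hv))⟩
  | sUnion 𝒮 _ ih =>
    intro S hS
    obtain ⟨s, hs𝒮, hSs⟩ := hS
    obtain ⟨O, F, hO, hF, hSO, hSF, hT⟩ := ih s hs𝒮 S hSs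
    exact ⟨O, F, hO, hF, hSO, hSF, fun T h1 h2 => ⟨s, hs𝒮, hT T h1 h2⟩⟩

lemma sc_basic {𝒲 : Set (Sc X)} (h : IsOpen 𝒲) {S : Sc X} (hS : S ∈ 𝒲) :
    ∃ (O : Set X) (F : Finset (Set X)), IsOpen O ∧ (∀ v ∈ F, IsOpen v) ∧
      S.1 ⊆ O ∧ (∀ v ∈ F, (S.1 ∩ v).Nonempty) ∧
      ∀ T : Sc X, T.1 ⊆ O → (∀ v ∈ F, (T.1 ∩ v).Nonempty) → T ∈ 𝒲 := by
  obtain ⟨t, ht, rfl⟩ := (@isOpen_induced_iff (Sc X) (Set X) (vietoris X) _ (fun S : Sc X => S.1)).1 h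
  have ht' : TopologicalSpace.GenerateOpen (vsub X) t := ht
  obtain ⟨O, F, hO, hF, hSO, hSF, hT⟩ := vietoris_basic ht' S.1 hS
  exact ⟨O, F, hO, hF, hSO, hSF, fun T h1 h2 => hT T.1 h1 h2⟩

/-- the "contained in U" subbasic open set of Sc X -/
lemma isOpen_scSub {U : Set X} (hU : IsOpen U) : IsOpen {S : Sc X | S.1 ⊆ U} := by
  refine (@isOpen_induced_iff (Sc X) (Set X) (vietoris X) _ (fun S : Sc X => S.1)).2 ⟨{S : Set X | S ⊆ U}, ?_, rfl⟩
  exact TopologicalSpace.isOpen_generateFrom_of_mem (Or.inl ⟨U, hU, rfl⟩ : _ ∈ vsub X)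

lemma isOpen_scHit {U : Set X} (hU : IsOpen U) : IsOpen {S : Sc X | (S.1 ∩ U).Nonempty} := by
  refine (@isOpen_induced_iff (Sc X) (Set X) (vietoris X) _ (fun S : Sc X => S.1)).2 ⟨{S : Set X | (S ∩ U).Nonempty}, ?_, rfl⟩
  exact TopologicalSpace.isOpen_generateFrom_of_mem (Or.inr ⟨U, hU, rfl⟩ : _ ∈ vsub X)

end Aux

section NCS
variable {X : Type*} [TopologicalSpace X] [T1Space X]

lemma IsNCS.insert' {S : Set X} (hS : IsNCS X S) (z : X) : IsNCS X (insert z S) := by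
  classical
  by_cases hz : z ∈ S
  · rwa [Set.insert_eq_self.2 hz]
  obtain ⟨hinf, hcnt, hcl, x, hconv, hiso, hniso⟩ := hS
  have hxz : x ≠ z := fun h => hz (h ▸ hconv.1)
  refine ⟨hinf.mono (Set.subset_insert _ _), hcnt.insert z,
    by rw [Set.insert_eq]; exact isClosed_singleton.union hcl, x,
    ⟨Set.mem_insert_of_mem _ hconv.1, ?_⟩, ?_, ?_⟩
  · intro U hU hxU
    refine ((hconv.2 U hU hxU).insert z).subset ?_
    intro a ha
    rcases ha.1 with rfl | haS
    · exact Set.mem_insert _ _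
    · exact Set.mem_insert_of_mem _ ⟨haS, ha.2⟩
  · intro y hy hyx
    rcases hy with rfl | hyS
    · refine ⟨Sᶜ, hcl.isOpen_compl, ?_⟩
      ext a
      simp only [Set.mem_inter_iff, Set.mem_compl_iff, Set.mem_insert_iff,
        Set.mem_singleton_iff]
      constructor
      · rintro ⟨haS, rfl | haS'⟩
        · rfl
        · exact absurd haS' haS
      · rintro rfl; exact ⟨hz, Or.inl rfl⟩
    · obtain ⟨U, hU, hUS⟩ := hiso y hyS hyx
      have hyz : y ≠ z := fun h => hz (h ▸ hyS)
      refine ⟨U ∩ {z}ᶜ, hU.inter isClosed_singleton.isOpen_compl, ?_⟩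
      ext a
      simp only [Set.mem_inter_iff, Set.mem_compl_iff, Set.mem_insert_iff,
        Set.mem_singleton_iff]
      constructor
      · rintro ⟨⟨haU, haz⟩, rfl | haS⟩
        · exact absurd rfl haz
        · have : a ∈ U ∩ S := ⟨haU, haS⟩
          rw [hUS] at this; exact this
      · rintro rfl
        have : a ∈ U ∩ S := by rw [hUS]; rfl
        exact ⟨⟨this.1, hyz⟩, Or.inr hyS⟩
  · rintro ⟨U, hU, hUx⟩
    refine hniso ⟨U, hU, ?_⟩
    apply Set.Subset.antisymm
    · intro a ha
      have : a ∈ U ∩ insert z S := ⟨ha.1, Set.mem_insert_of_mem _ ha.2⟩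
      rw [hUx] at this; exact this
    · intro a ha
      rw [Set.mem_singleton_iff] at ha
      have hx : x ∈ U ∩ insert z S := by rw [hUx]; rfl
      rw [ha]
      exact ⟨hx.1, hconv.1⟩

lemma IsNCS.union_finite {S F : Set X} (hS : IsNCS X S) (hF : F.Finite) :
    IsNCS X (S ∪ F) := by
  refine Set.Finite.induction_on (motive := fun F _ => IsNCS X (S ∪ F)) F hF (by simpa using hS) ?_
  intro a F' _ _ ih
  rw [Set.union_insert]
  exact ih.insert' _

end NCS

section Crowd
variable {X : Type*} [TopologicalSpace X] [T35Space X]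

lemma crowded_kids {V : Set X} (hcr : ∀ z ∈ V, ¬ IsOpen ({z} : Set X))
    {P : Set X} (hP : IsOpen P) (hPne : P.Nonempty) (hPV : P ⊆ V) :
    ∃ C : Bool → Set X, (∀ b, IsOpen (C b) ∧ (C b).Nonempty ∧ closure (C b) ⊆ P) ∧
      Disjoint (closure (C false)) (closure (C true)) := by
  obtain ⟨y, hy⟩ := hPne
  have h2 : ∃ z ∈ P, z ≠ y := by
    by_contra h
    push_neg at h
    have hPy : P = {y} := Set.Subset.antisymm (fun a ha => h a ha) (by simpa using hy)
    exact hcr y (hPV hy) (hPy ▸ hP)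
  obtain ⟨z, hzP, hzy⟩ := h2
  obtain ⟨u, v, hu, hv, hyu, hzv, huv⟩ := t2_separation hzy.symm
  obtain ⟨t1, ht1n, ht1c, ht1s⟩ :=
    exists_mem_nhds_isClosed_subset ((hP.inter hu).mem_nhds ⟨hy, hyu⟩)
  obtain ⟨t2, ht2n, ht2c, ht2s⟩ :=
    exists_mem_nhds_isClosed_subset ((hP.inter hv).mem_nhds ⟨hzP, hzv⟩)
  refine ⟨fun b => if b then interior t2 else interior t1, ?_, ?_⟩
  · intro b
    cases b <;> simp only [if_true, if_false, Bool.false_eq_true]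
    · exact ⟨isOpen_interior, ⟨y, mem_interior_iff_mem_nhds.2 ht1n⟩,
        ((closure_minimal interior_subset ht1c).trans (ht1s.trans inter_subset_left))⟩
    · exact ⟨isOpen_interior, ⟨z, mem_interior_iff_mem_nhds.2 ht2n⟩,
        ((closure_minimal interior_subset ht2c).trans (ht2s.trans inter_subset_left))⟩
  · simp only [if_true, if_false, Bool.false_eq_true]
    refine huv.mono ?_ ?_
    · exact (closure_minimal interior_subset ht1c).trans (ht1s.trans inter_subset_right)
    · exact (closure_minimal interior_subset ht2c).trans (ht2s.trans inter_subset_right)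

end Crowd

section Tree
variable {X : Type*} [TopologicalSpace X]

/-- a pair: an open family of sequences together with a tree of cells -/
def ScPair (X : Type*) [TopologicalSpace X] : Type _ := Set (Sc X) × (List Bool → Set X)

/-- invariant for a pair at level `n` -/
def ScInv (V : Set X) (n : ℕ) (p : ScPair X) : Prop :=
  IsOpen p.1 ∧ p.1.Nonempty ∧ p.2 [] = V ∧
  (∀ t : List Bool, 1 ≤ t.length → t.length ≤ n → IsOpen (p.2 t)) ∧
  (∀ t : List Bool, 1 ≤ t.length → t.length ≤ n → ∀ S ∈ p.1,
      ((S : Sc X).1 ∩ p.2 t).Nonempty) ∧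
  (∀ t : List Bool, ∀ b : Bool, t.length < n → closure (p.2 (t ++ [b])) ⊆ p.2 t) ∧
  (∀ t : List Bool, t.length < n →
      Disjoint (closure (p.2 (t ++ [false]))) (closure (p.2 (t ++ [true]))))

/-- admissible families at level `n` extending families in `Prev` -/
def ScFam (V : Set X) (n : ℕ) (Prev : Set (ScPair X)) (M : Set (ScPair X)) : Prop :=
  (∀ p ∈ M, ScInv V n p) ∧
  (∀ p ∈ M, ∀ q ∈ M, p ≠ q → Disjoint p.1 q.1) ∧
  (∀ p ∈ M, ∃ q ∈ Prev, p.1 ⊆ q.1 ∧ ∀ t : List Bool, t.length < n → p.2 t = q.2 t)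

lemma exists_maximal_scFam (V : Set X) (n : ℕ) (Prev : Set (ScPair X)) :
    ∃ M, Maximal (ScFam V n Prev) M := by
  have := zorn_subset {M : Set (ScPair X) | ScFam V n Prev M} ?_
  · obtain ⟨m, hm⟩ := this
    exact ⟨m, hm⟩
  · intro c hc hchain
    refine ⟨⋃₀ c, ⟨?_, ?_, ?_⟩, fun s hs => Set.subset_sUnion_of_mem hs⟩
    · rintro p ⟨M, hM, hpM⟩
      exact (hc hM).1 p hpM
    · rintro p ⟨M1, hM1, hpM1⟩ q ⟨M2, hM2, hqM2⟩ hpq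
      rcases hchain.total hM1 hM2 with h | h
      · exact (hc hM2).2.1 p (h hpM1) q hqM2 hpq
      · exact (hc hM1).2.1 p hpM1 q (h hqM2) hpq
    · rintro p ⟨M, hM, hpM⟩
      exact (hc hM).2.2 p hpM

/-- the recursively chosen maximal families -/
noncomputable def scM (V : Set X) : ℕ → Set (ScPair X)
  | 0 => {((Set.univ : Set (Sc X)), fun _ => V)}
  | n + 1 => (exists_maximal_scFam V (n + 1) (scM V n)).choose

lemma scM_max (V : Set X) (n : ℕ) :
    Maximal (ScFam V (n + 1) (scM V n)) (scM V (n + 1)) :=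
  (exists_maximal_scFam V (n + 1) (scM V n)).choose_spec

lemma scM_inv (V : Set X) (hV : ∀ p ∈ scM V 0, ScInv V 0 p) (n : ℕ) :
    ∀ p ∈ scM V n, ScInv V n p := by
  cases n with
  | zero => exact hV
  | succ n => exact (scM_max V n).1.1

lemma scM_pairwise (V : Set X) (n : ℕ) :
    ∀ p ∈ scM V n, ∀ q ∈ scM V n, p ≠ q → Disjoint p.1 q.1 := by
  cases n with
  | zero =>
    intro p hp q hq hpq
    simp only [scM, Set.mem_singleton_iff] at hp hq
    exact absurd (hp.trans hq.symm) hpq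
  | succ n => exact (scM_max V n).1.2.1

/-- cells of positive depth are inside V -/
lemma scInv_cell_subset {V : Set X} {n : ℕ} {p : ScPair X} (hp : ScInv V n p) :
    ∀ k : ℕ, ∀ t : List Bool, t.length = k + 1 → t.length ≤ n → p.2 t ⊆ V := by
  intro k
  induction k with
  | zero =>
    intro t ht hn
    have htne : t ≠ [] := by intro h; rw [h] at ht; simp at ht
    obtain ⟨s, b, rfl⟩ : ∃ s b, t = s ++ [b] :=
      ⟨t.dropLast, t.getLast htne, (List.dropLast_append_getLast htne).symm⟩
    have hs : s.length = 0 := by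
      have := ht; rw [List.length_append] at this; simpa using this
    have hs' : s = [] := List.length_eq_zero_iff.1 hs
    subst hs'
    have h1 := hp.2.2.2.2.2.1 [] b (by simp at hn ⊢; omega)
    rw [hp.2.2.1] at h1
    exact subset_closure.trans h1
  | succ k ih =>
    intro t ht hn
    have htne : t ≠ [] := by intro h; rw [h] at ht; simp at ht
    obtain ⟨s, b, rfl⟩ : ∃ s b, t = s ++ [b] :=
      ⟨t.dropLast, t.getLast htne, (List.dropLast_append_getLast htne).symm⟩
    have hs : s.length = k + 1 := by
      have := ht; rw [List.length_append] at this; simpa using this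
    have h1 := hp.2.2.2.2.2.1 s b (by omega)
    have h2 := ih s hs (by omega)
    exact (subset_closure.trans h1).trans h2

end Tree

section Step
variable {X : Type*} [TopologicalSpace X] [T35Space X]

lemma sc_step {V : Set X} (hVo : IsOpen V) (kids : Set X → Bool → Set X)
    (hkids : ∀ P : Set X, IsOpen P → P.Nonempty → P ⊆ V →
      ((∀ b, IsOpen (kids P b) ∧ (kids P b).Nonempty ∧ closure (kids P b) ⊆ P) ∧
        Disjoint (closure (kids P false)) (closure (kids P true))))
    {n : ℕ} {q : ScPair X} (hqInv : ScInv V n q)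
    {𝒲 : Set (Sc X)} (h𝒲 : IsOpen 𝒲)
    {S : Sc X} (hSW : S ∈ 𝒲) (hSq : S ∈ q.1)
    (hSE : (S.1 ∩ closure V).Nonempty) :
    ∃ p' : ScPair X, ScInv V (n + 1) p' ∧ p'.1 ⊆ 𝒲 ∩ q.1 ∧
      (∀ t : List Bool, t.length < n + 1 → p'.2 t = q.2 t) := by
  classical
  obtain ⟨O, F, hO, hF, hSO, hSF, hbasic⟩ :=
    sc_basic (h𝒲.inter hqInv.1) (Set.mem_inter hSW hSq)
  -- the parent regions at depth n
  have hProot : ∀ s : List Bool, s.length = n →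
      IsOpen (O ∩ q.2 s) ∧ (O ∩ q.2 s).Nonempty ∧ O ∩ q.2 s ⊆ V := by
    intro s hs
    cases n with
    | zero =>
      have hs' : s = [] := List.length_eq_zero_iff.1 hs
      subst hs'
      rw [hqInv.2.2.1]
      obtain ⟨w, hwS, hwV⟩ := hSE
      refine ⟨hO.inter hVo, ?_, inter_subset_right⟩
      have hwO : w ∈ O := hSO hwS
      rcases mem_closure_iff.1 hwV O hO hwO with ⟨u, hu⟩
      exact ⟨u, hu⟩
    | succ m =>
      have h1 : 1 ≤ s.length := by omega
      have h2 : s.length ≤ m + 1 := by omega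
      obtain ⟨w, hw1, hw2⟩ := hqInv.2.2.2.2.1 s h1 h2 S hSq
      exact ⟨hO.inter (hqInv.2.2.2.1 s h1 h2), ⟨w, hSO hw1, hw2⟩,
        inter_subset_right.trans (scInv_cell_subset hqInv m s hs h2)⟩
  -- the new cells
  set f' : List Bool → Set X :=
    fun t => if t.length ≤ n then q.2 t else kids (O ∩ q.2 t.dropLast) (t.getLastD false)
    with hf'
  have f'_low : ∀ t : List Bool, t.length ≤ n → f' t = q.2 t := by
    intro t ht
    simp only [hf']
    rw [if_pos ht]
  have f'_high : ∀ t : List Bool, ¬ (t.length ≤ n) →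
      f' t = kids (O ∩ q.2 t.dropLast) (t.getLastD false) := by
    intro t ht
    simp only [hf']
    rw [if_neg ht]
  have hconcat : ∀ (s : List Bool) (b : Bool), s.length = n → f' (s ++ [b]) = kids (O ∩ q.2 s) b := by
    intro s b hs
    rw [f'_high (s ++ [b]) (by simp [List.length_append]; omega),
      List.dropLast_concat, List.getLastD_concat]
  have hcell : ∀ t : List Bool, t.length = n + 1 →
      IsOpen (f' t) ∧ (f' t).Nonempty ∧ closure (f' t) ⊆ O ∩ q.2 t.dropLast := by
    intro t ht
    have hd : t.dropLast.length = n := by rw [List.length_dropLast, ht]; omega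
    obtain ⟨hPo, hPne, hPV⟩ := hProot t.dropLast hd
    obtain ⟨hk, _⟩ := hkids _ hPo hPne hPV
    rw [f'_high t (by omega)]
    exact ⟨(hk _).1, (hk _).2.1, (hk _).2.2⟩
  -- the new open set
  set 𝒰' : Set (Sc X) := {T : Sc X | T.1 ⊆ O ∧ (∀ v ∈ F, (T.1 ∩ v).Nonempty) ∧
      ∀ t : List Bool, t.length = n + 1 → (T.1 ∩ f' t).Nonempty} with h𝒰'
  have h𝒰'sub : 𝒰' ⊆ 𝒲 ∩ q.1 := fun T hT => hbasic T hT.1 hT.2.1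
  have h𝒰'open : IsOpen 𝒰' := by
    have : 𝒰' = {T : Sc X | T.1 ⊆ O} ∩
        ((⋂ v ∈ (F : Set (Set X)), {T : Sc X | (T.1 ∩ v).Nonempty}) ∩
          ⋂ t ∈ {t : List Bool | t.length = n + 1}, {T : Sc X | (T.1 ∩ f' t).Nonempty}) := by
      ext T
      simp only [h𝒰', Set.mem_setOf_eq, Set.mem_inter_iff, Set.mem_iInter,
        Finset.mem_coe, Set.mem_setOf_eq]
      try tauto
    rw [this]
    refine (isOpen_scSub hO).inter (IsOpen.inter ?_ ?_)
    · exact F.finite_toSet.isOpen_biInter fun v hv => isOpen_scHit (hF v hv)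
    · exact (List.finite_length_eq Bool (n + 1)).isOpen_biInter
        fun t ht => isOpen_scHit (hcell t ht).1
  -- witness member of 𝒰'
  have hzex : ∀ t : List Bool, t.length = n + 1 → ∃ w, w ∈ f' t := fun t ht => (hcell t ht).2.1
  have hXne : Nonempty X := ⟨S.2.1.nonempty.choose⟩
  choose! z hz using hzex
  have hT₀ : IsNCS X (S.1 ∪ z '' {t : List Bool | t.length = n + 1}) :=
    S.2.union_finite ((List.finite_length_eq Bool (n + 1)).image z)
  set T₀ : Sc X := ⟨_, hT₀⟩ with hT₀def
  have hT₀mem : T₀ ∈ 𝒰' := by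
    refine ⟨?_, ?_, ?_⟩
    · refine Set.union_subset hSO ?_
      rintro _ ⟨t, ht, rfl⟩
      exact ((subset_closure.trans (hcell t ht).2.2) (hz t ht)).1
    · exact fun v hv => (hSF v hv).mono (Set.inter_subset_inter_left _ Set.subset_union_left)
    · intro t ht
      exact ⟨z t, Set.mem_union_right _ ⟨t, ht, rfl⟩, hz t ht⟩
  refine ⟨(𝒰', f'), ⟨h𝒰'open, ⟨T₀, hT₀mem⟩, ?_, ?_, ?_, ?_, ?_⟩, h𝒰'sub, ?_⟩
  · show f' [] = V
    rw [f'_low [] (by simp)]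
    exact hqInv.2.2.1
  · -- openness of cells
    intro t h1 h2
    show IsOpen (f' t)
    by_cases h : t.length ≤ n
    · rw [f'_low t h]; exact hqInv.2.2.2.1 t h1 h
    · exact (hcell t (by omega)).1
  · -- hits
    intro t h1 h2 T hT
    show (T.1 ∩ f' t).Nonempty
    by_cases h : t.length ≤ n
    · rw [f'_low t h]
      exact hqInv.2.2.2.2.1 t h1 h T (h𝒰'sub hT).2
    · exact hT.2.2 t (by omega)
  · -- nesting of closures
    intro t b hlt
    show closure (f' (t ++ [b])) ⊆ f' t
    by_cases h : t.length < n
    · rw [f'_low (t ++ [b]) (by simp [List.length_append]; omega), f'_low t (by omega)]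
      exact hqInv.2.2.2.2.2.1 t b h
    · have ht : t.length = n := by omega
      rw [hconcat t b ht, f'_low t (by omega)]
      obtain ⟨hPo, hPne, hPV⟩ := hProot t ht
      exact ((hkids _ hPo hPne hPV).1 b).2.2.trans inter_subset_right
  · -- disjointness of sibling closures
    intro t hlt
    show Disjoint (closure (f' (t ++ [false]))) (closure (f' (t ++ [true])))
    by_cases h : t.length < n
    · rw [f'_low (t ++ [false]) (by simp [List.length_append]; omega),
        f'_low (t ++ [true]) (by simp [List.length_append]; omega)]
      exact hqInv.2.2.2.2.2.2 t h
    · have ht : t.length = n := by omega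
      rw [hconcat t false ht, hconcat t true ht]
      obtain ⟨hPo, hPne, hPV⟩ := hProot t ht
      exact (hkids _ hPo hPne hPV).2
  · -- cells below level n+1 agree with q
    intro t hlt
    show f' t = q.2 t
    exact f'_low t (by omega)

end Step

section Main
variable {X : Type*} [TopologicalSpace X] [T35Space X]

lemma exists_isolated (hne : ∃ S : Set X, IsNCS X S) (hB : BaireSpace (Sc X)) :
    ∀ V : Set X, IsOpen V → V.Nonempty → ∃ z ∈ V, IsOpen ({z} : Set X) := by
  intro V hVo hVne
  by_contra hcon
  push_neg at hcon
  classical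
  obtain ⟨S₀set, hS₀⟩ := hne
  have hScne : Nonempty (Sc X) := ⟨⟨S₀set, hS₀⟩⟩
  -- choice of pairs of separated children in crowded open subsets of V
  have hkex : ∀ P : Set X, IsOpen P → P.Nonempty → P ⊆ V →
      ∃ C : Bool → Set X, (∀ b, IsOpen (C b) ∧ (C b).Nonempty ∧ closure (C b) ⊆ P) ∧
        Disjoint (closure (C false)) (closure (C true)) :=
    fun P h1 h2 h3 => crowded_kids hcon h1 h2 h3
  choose! kids hkids using hkex
  -- the base level family is fine
  have hbase : ∀ p ∈ scM V 0, ScInv V 0 p := by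
    intro p hp
    simp only [scM, Set.mem_singleton_iff] at hp
    subst hp
    exact ⟨isOpen_univ, Set.univ_nonempty, rfl,
      fun t h1 h2 => absurd (h1.trans h2) (by omega),
      fun t h1 h2 => absurd (h1.trans h2) (by omega),
      fun t b h => absurd h (by omega),
      fun t h => absurd h (by omega)⟩
  -- the dense open sets
  set E : Set (Sc X) := {T : Sc X | T.1 ⊆ (closure V)ᶜ} with hE
  have hEopen : IsOpen E := isOpen_scSub isClosed_closure.isOpen_compl
  set D : ℕ → Set (Sc X) := fun n => E ∪ ⋃ p ∈ scM V n, (p : ScPair X).1 with hD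
  have hDopen : ∀ n, IsOpen (D n) := by
    intro n
    exact hEopen.union (isOpen_biUnion fun p hp => (scM_inv V hbase n p hp).1)
  have hDdense : ∀ n, Dense (D n) := by
    intro n
    induction n with
    | zero =>
      have huniv : D 0 = Set.univ := by
        apply Set.eq_univ_of_univ_subset
        intro T _
        exact Or.inr (Set.mem_biUnion
          (show ((Set.univ : Set (Sc X)), fun _ : List Bool => V) ∈ scM V 0 by simp only [scM]; exact Set.mem_singleton _)
          (Set.mem_univ T))
      rw [huniv]; exact dense_univ
    | succ n ih =>
      by_contra hnd
      rw [dense_iff_inter_open] at hnd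
      push_neg at hnd
      obtain ⟨𝒲, h𝒲o, h𝒲ne, h𝒲empty⟩ := hnd
      have hWE : ∀ T ∈ 𝒲, T ∉ E := by
        intro T hT hTE
        have : T ∈ 𝒲 ∩ D (n + 1) := ⟨hT, Or.inl hTE⟩
        rw [h𝒲empty] at this
        exact this
      obtain ⟨S₁, hS₁W, hS₁D⟩ := ih.inter_open_nonempty 𝒲 h𝒲o h𝒲ne
      rcases hS₁D with hS₁E | hS₁U
      · exact hWE S₁ hS₁W hS₁E
      obtain ⟨q, hqM, hS₁q⟩ := Set.mem_iUnion₂.1 hS₁U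
      have hSE : (S₁.1 ∩ closure V).Nonempty := by
        obtain ⟨w, hw1, hw2⟩ := Set.not_subset.1 (fun h => hWE S₁ hS₁W h)
        exact ⟨w, hw1, Set.notMem_compl_iff.1 hw2⟩
      obtain ⟨p', hp'Inv, hp'sub, hp'ext⟩ :=
        sc_step hVo kids hkids (scM_inv V hbase n q hqM) h𝒲o hS₁W hS₁q hSE
      have hp'W : p'.1 ⊆ 𝒲 := hp'sub.trans inter_subset_left
      have hfam : ScFam V (n + 1) (scM V n) (insert p' (scM V (n + 1))) := by
        refine ⟨?_, ?_, ?_⟩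
        · rintro p (rfl | hp)
          · exact hp'Inv
          · exact (scM_max V n).1.1 p hp
        · have hdisj : ∀ r ∈ scM V (n + 1), Disjoint p'.1 r.1 := by
            intro r hr
            rw [Set.disjoint_left]
            intro a hap har
            have : a ∈ 𝒲 ∩ D (n + 1) := ⟨hp'W hap, Or.inr (Set.mem_biUnion hr har)⟩
            rw [h𝒲empty] at this
            exact this
          rintro p (rfl | hp) r (rfl | hr) hne'
          · exact absurd rfl hne'
          · exact hdisj r hr
          · exact (hdisj p hp).symm
          · exact (scM_max V n).1.2.1 p hp r hr hne'
        · rintro p (rfl | hp)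
          · exact ⟨q, hqM, hp'sub.trans inter_subset_right, hp'ext⟩
          · exact (scM_max V n).1.2.2 p hp
      have hsub : insert p' (scM V (n + 1)) ⊆ scM V (n + 1) :=
        (scM_max V n).2 hfam (Set.subset_insert _ _)
      have hp'mem : p' ∈ scM V (n + 1) := hsub (Set.mem_insert _ _)
      obtain ⟨T, hT⟩ := hp'Inv.2.1
      have : T ∈ 𝒲 ∩ D (n + 1) := ⟨hp'W hT, Or.inr (Set.mem_biUnion hp'mem hT)⟩
      rw [h𝒲empty] at this
      exact this
  -- a generic element of the hit-set of V
  have hWo : IsOpen {T : Sc X | (T.1 ∩ V).Nonempty} := isOpen_scHit hVo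
  obtain ⟨y, hy⟩ := hVne
  have hWne : {T : Sc X | (T.1 ∩ V).Nonempty}.Nonempty :=
    ⟨⟨insert y S₀set, hS₀.insert' y⟩, ⟨y, Set.mem_insert _ _, hy⟩⟩
  haveI := hB
  have hDint : Dense (⋂ n, D n) := dense_iInter_of_isOpen hDopen hDdense
  obtain ⟨Sg, hSgW, hSgD⟩ := hDint.inter_open_nonempty _ hWo hWne
  have hSgE : Sg ∉ E := by
    intro hmem
    obtain ⟨w, hw1, hw2⟩ := hSgW
    exact hmem hw1 (subset_closure hw2)
  have hp : ∀ n, ∃ p, p ∈ scM V n ∧ Sg ∈ p.1 := by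
    intro n
    have := Set.mem_iInter.1 hSgD n
    rcases this with h | h
    · exact absurd h hSgE
    · obtain ⟨p, hp1, hp2⟩ := Set.mem_iUnion₂.1 h
      exact ⟨p, hp1, hp2⟩
  choose pn hpnM hpnS using hp
  -- coherence of the cell trees along Sg
  have hcoh : ∀ n, ∀ t : List Bool, t.length ≤ n → (pn n).2 t = (pn t.length).2 t := by
    intro n
    induction n with
    | zero =>
      intro t ht
      have h0 : t.length = 0 := Nat.le_zero.1 ht
      rw [h0]
    | succ n ih =>
      intro t ht
      rcases Nat.lt_or_ge t.length (n + 1) with h | h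
      · obtain ⟨q, hqM, hqsub, hqext⟩ := (scM_max V n).1.2.2 (pn (n + 1)) (hpnM (n + 1))
        have hq : q = pn n := by
          by_contra hne'
          have hd := scM_pairwise V n q hqM (pn n) (hpnM n) hne'
          exact Set.disjoint_left.1 hd (hqsub (hpnS (n + 1))) (hpnS n)
        rw [hqext t h, hq, ih t (by omega)]
      · have h1 : t.length = n + 1 := by omega
        rw [h1]
  set g : List Bool → Set X := fun t => (pn t.length).2 t with hg
  have hgroot : g [] = V := (scM_inv V hbase 0 (pn 0) (hpnM 0)).2.2.1
  have hghit : ∀ t : List Bool, (Sg.1 ∩ g t).Nonempty := by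
    intro t
    rcases Nat.eq_zero_or_pos t.length with h | h
    · have h0 : t = [] := List.length_eq_zero_iff.1 h
      rw [h0, hgroot]
      exact hSgW
    · exact (scM_inv V hbase t.length (pn t.length) (hpnM t.length)).2.2.2.2.1 t h le_rfl
        Sg (hpnS t.length)
  have hlenapp : ∀ (t : List Bool) (b : Bool), (t ++ [b]).length = t.length + 1 := by
    intro t b; simp
  have hgcl : ∀ (t : List Bool) (b : Bool), closure (g (t ++ [b])) ⊆ g t := by
    intro t b
    have e1 : (pn (t.length + 1)).2 (t ++ [b]) = g (t ++ [b]) := by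
      have h' := hcoh (t.length + 1) (t ++ [b]) (by rw [hlenapp])
      exact h'
    have e2 : (pn (t.length + 1)).2 t = g t := hcoh (t.length + 1) t (by omega)
    rw [← e1, ← e2]
    exact (scM_inv V hbase (t.length + 1) _ (hpnM _)).2.2.2.2.2.1 t b (by omega)
  have hgdisj : ∀ t : List Bool,
      Disjoint (closure (g (t ++ [false]))) (closure (g (t ++ [true])))  := by
    intro t
    have e1 : ∀ b : Bool, (pn (t.length + 1)).2 (t ++ [b]) = g (t ++ [b]) := by
      intro b
      have h' := hcoh (t.length + 1) (t ++ [b]) (by rw [hlenapp])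
      exact h'
    rw [← e1 false, ← e1 true]
    exact (scM_inv V hbase (t.length + 1) _ (hpnM _)).2.2.2.2.2.2 t (by omega)
  -- the branch argument
  obtain ⟨hinf, hcnt, hcl, x, hx, _, _⟩ := Sg.2
  set pre : (ℕ → Bool) → ℕ → List Bool := fun σ k => List.ofFn (fun i : Fin k => σ i)
    with hpre_def
  have hpresucc : ∀ (σ : ℕ → Bool) (k : ℕ), pre σ (k + 1) = pre σ k ++ [σ k] := by
    intro σ k
    simp only [hpre_def, List.ofFn_succ', List.concat_eq_append, Fin.coe_castSucc,
      Fin.val_last]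
  have hbp : ∀ σ : ℕ → Bool, ∃ p : X, ∀ k, p ∈ Sg.1 ∩ closure (g (pre σ k)) := by
    intro σ
    set C : ℕ → Set X := fun k => Sg.1 ∩ closure (g (pre σ k)) with hC
    have hCdec : ∀ k, C (k + 1) ⊆ C k := by
      intro k a ha
      refine ⟨ha.1, ?_⟩
      have h1 : closure (g (pre σ (k + 1))) ⊆ g (pre σ k) := by
        rw [hpresucc]; exact hgcl _ _
      exact subset_closure (h1 ha.2)
    have hCne : ∀ k, (C k).Nonempty :=
      fun k => (hghit (pre σ k)).mono (Set.inter_subset_inter_right _ subset_closure)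
    have hCcl : ∀ k, IsClosed (C k) := fun k => hcl.inter isClosed_closure
    have hmono : ∀ j k, j ≤ k → C k ⊆ C j := fun j k hjk =>
      (antitone_nat_of_succ_le hCdec) hjk
    by_cases hxc : ∀ k, x ∈ C k
    · exact ⟨x, hxc⟩
    · push_neg at hxc
      obtain ⟨k₀, hk₀⟩ := hxc
      have hxS : x ∈ Sg.1 := hx.1
      have hxU : x ∈ (closure (g (pre σ k₀)))ᶜ := fun hmem => hk₀ ⟨hxS, hmem⟩
      have hfin : (C k₀).Finite := by
        refine (hx.2 _ isClosed_closure.isOpen_compl hxU).subset ?_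
        intro a ha
        exact ⟨ha.1, Set.notMem_compl_iff.2 ha.2⟩
      obtain ⟨p, hp⟩ := IsCompact.nonempty_iInter_of_sequence_nonempty_isCompact_isClosed
        (fun k => C (k₀ + k)) (fun k => hmono _ _ (by omega)) (fun k => hCne _)
        (by simpa using hfin.isCompact) (fun k => hCcl _)
      exact ⟨p, fun k => hmono k (k₀ + k) (by omega) (Set.mem_iInter.1 hp k)⟩
  choose Φ hΦ using hbp
  have hinj : Function.Injective Φ := by
    intro σ τ hστ
    by_contra hne'
    have hex : ∃ k, σ k ≠ τ k := Function.ne_iff.1 hne'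
    have hkspec : σ (Nat.find hex) ≠ τ (Nat.find hex) := Nat.find_spec hex
    have hmin : ∀ i < Nat.find hex, σ i = τ i := fun i hi => not_not.1 (Nat.find_min hex hi)
    set k := Nat.find hex
    have hpre : pre σ k = pre τ k := by
      simp only [hpre_def]
      exact congrArg List.ofFn (funext fun i => hmin i i.isLt)
    have h1 : Φ σ ∈ closure (g (pre σ k ++ [σ k])) := by
      have := (hΦ σ (k + 1)).2
      rwa [hpresucc] at this
    have h2 : Φ σ ∈ closure (g (pre σ k ++ [τ k])) := by
      have := (hΦ τ (k + 1)).2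
      rw [hpresucc, ← hpre, ← hστ] at this
      exact this
    have hdis := hgdisj (pre σ k)
    cases hσk : σ k <;> cases hτk : τ k
    · exact hkspec (hσk.trans hτk.symm)
    · rw [hσk] at h1; rw [hτk] at h2
      exact Set.disjoint_left.1 hdis h1 h2
    · rw [hσk] at h1; rw [hτk] at h2
      exact Set.disjoint_left.1 hdis h2 h1
    · exact hkspec (hσk.trans hτk.symm)
  obtain ⟨fN, hfN⟩ := Set.countable_iff_exists_injective.1 hcnt
  have hΦmem : ∀ σ, Φ σ ∈ Sg.1 := fun σ => (hΦ σ 0).1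
  set χ : Set ℕ → (ℕ → Bool) := fun A n => if n ∈ A then true else false with hχ
  have hχinj : Function.Injective χ := by
    intro A B hAB
    ext n
    have h := congrFun hAB n
    by_cases hA : n ∈ A <;> by_cases hB : n ∈ B <;>
      simp only [hχ, hA, hB, if_true, if_false] at h <;> tauto
  have hfinal : Function.Injective (fun A : Set ℕ => fN ⟨Φ (χ A), hΦmem _⟩) := by
    intro A B h
    have h2 := hfN h
    have h3 : Φ (χ A) = Φ (χ B) := congrArg Subtype.val h2
    exact hχinj (hinj h3)
  exact Function.cantor_injective _ hfinal

end Main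

/-- If `S_c(X)` is a Baire space, then `X` is a Baire space. -/
theorem stmt6 {X : Type*} [TopologicalSpace X] [T35Space X]
    (hne : ∃ S : Set X, IsNCS X S) (hB : BaireSpace (Sc X)) :
    BaireSpace X := by
  have key := exists_isolated hne hB
  refine ⟨fun f hfo hfd => ?_⟩
  rw [dense_iff_inter_open]
  intro U hU hUne
  obtain ⟨z, hzU, hziso⟩ := key U hU hUne
  refine ⟨z, hzU, Set.mem_iInter.2 fun n => ?_⟩
  obtain ⟨w, hw1, hw2⟩ := (hfd n).inter_open_nonempty _ hziso ⟨z, rfl⟩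
  rw [Set.mem_singleton_iff] at hw1
  rwa [hw1] at hw2
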